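/- Let n ∈ ℕ, h > 0, and let z ∈ ℂ with 0 < |z| < 1; set λ := z + 1/z. Then λ is an eigenvalue of J_{n,h} if and only if there exists ζ ∈ ℂ with 0 < |ζ| < 1 such that ζ^{2n−1}(ζ² − 1)² − ih(1 − ζ^{2n})(1 − ζ^{2n+2}) = 0 and z = (ζ^{2n+2} − 1)/(ζ^{2n+1} − ζ). -/

import Mathlib

noncomputable section

/-- `l` is an eigenvalue of the semi-infinite discrete Schrödinger matrix `J_{n,h}`
with pure imaginary step potential (diagonal entries `i h` on sites `1,…,n`, `0` afterwards;
off-diagonal entries `1`): there is a nonzero square-summable sequence `g = (g_k)_{k ≥ 1}`,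
extended by `g 0 = 0`, with `g_{k-1} + b_k g_k + g_{k+1} = l g_k` for all `k ≥ 1`. -/
def IsSchrodingerEigenvalue (n : ℕ) (h : ℝ) (l : ℂ) : Prop :=
  ∃ g : ℕ → ℂ, g 0 = 0 ∧ g ≠ 0 ∧ Summable (fun k : ℕ => ‖g k‖ ^ 2) ∧
    ∀ k : ℕ, 1 ≤ k →
      g (k - 1) + (if k ≤ n then (h : ℂ) * Complex.I else 0) * g k + g (k + 1) = l * g k

/-!
A solution `g` of the eigenvalue equation with `g 0 = 0` is determined by `g 1`. On the sites
`k ≤ n` it is `g k = g 1 * U_{k-1}(μ / 2)` with `μ = λ - i h`; beyond `n` it solves the free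
equation, whose solutions are combinations of `z^k` and `z^{-k}`, and square-summability forces
`g (n + 1) = z * g n`. So `λ` is an eigenvalue iff `U_n(μ / 2) = z * U_{n-1}(μ / 2)`.
If `μ` were real this would make `z`, hence `λ`, real, which `h > 0` forbids; so `μ = ζ + ζ⁻¹`
with `0 < |ζ| < 1`, where `U_{k-1}(μ / 2) = (ζ^k - ζ^{-k}) / (ζ - ζ⁻¹)`. The condition then
reads `z = (ζ^{2n+2} - 1) / (ζ^{2n+1} - ζ)`, and `λ = ζ + ζ⁻¹ + i h` becomes the polynomial
equation in `ζ`.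
-/

open Filter Topology

/-- `chebSeq c k = U_{k-1}(c / 2)` for the Chebyshev polynomials `U` of the second kind. -/
def chebSeq {R : Type*} [CommRing R] (c : R) : ℕ → R
  | 0 => 0
  | 1 => 1
  | k + 2 => c * chebSeq c (k + 1) - chebSeq c k

section ThreeTermRecurrence

variable {R : Type*} [CommRing R]

@[simp] lemma chebSeq_zero (c : R) : chebSeq c 0 = 0 := rfl

@[simp] lemma chebSeq_one (c : R) : chebSeq c 1 = 1 := rfl

lemma chebSeq_add_two (c : R) (k : ℕ) :
    chebSeq c (k + 2) = c * chebSeq c (k + 1) - chebSeq c k := rfl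

lemma map_chebSeq {S : Type*} [CommRing S] (f : R →+* S) (c : R) (k : ℕ) :
    f (chebSeq c k) = chebSeq (f c) k := by
  induction k using Nat.twoStepInduction with
  | zero => simp
  | one => simp
  | more k ih0 ih1 => simp [chebSeq_add_two, ih0, ih1]

lemma chebSeq_succ_ne_zero_of_eq_zero [Nontrivial R] {c : R} {k : ℕ} (hk : chebSeq c k = 0) :
    chebSeq c (k + 1) ≠ 0 := by
  induction k with
  | zero => simp
  | succ k ih =>
    intro hk2
    exact ih (by linear_combination c * hk - hk2 + chebSeq_add_two c k) hk

lemma eq_mul_chebSeq {c : R} {u : ℕ → R} {N : ℕ} (h0 : u 0 = 0)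
    (hrec : ∀ j, j + 1 ≤ N → u (j + 2) = c * u (j + 1) - u j) :
    ∀ k ≤ N + 1, u k = u 1 * chebSeq c k := by
  intro k
  induction k using Nat.twoStepInduction with
  | zero => simp [h0]
  | one => simp
  | more k ih0 ih1 =>
    intro hk
    rw [hrec k (by omega), ih1 (by omega), ih0 (by omega), chebSeq_add_two]
    ring

lemma pow_mul_chebSeq {c ζ : R} (hζ : c * ζ = ζ ^ 2 + 1) (k : ℕ) :
    ζ ^ k * (ζ ^ 2 - 1) * chebSeq c k = ζ * (ζ ^ (2 * k) - 1) := by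
  induction k using Nat.twoStepInduction with
  | zero => simp
  | one => simp
  | more k ih0 ih1 =>
    rw [chebSeq_add_two]
    linear_combination ζ * c * ih1 - ζ ^ 2 * ih0 + ζ * (ζ ^ (2 * k + 2) - 1) * hζ

lemma eq_mul_pow_of_recurrence {c z : R} (hz : c * z = z ^ 2 + 1) {u : ℕ → R}
    (hrec : ∀ j, u (j + 2) = c * u (j + 1) - u j) (h1 : u 1 = z * u 0) (k : ℕ) :
    u k = u 0 * z ^ k := by
  induction k using Nat.twoStepInduction with
  | zero => simp
  | one => rw [h1]; ring
  | more k ih0 ih1 =>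
    rw [hrec, ih1, ih0]
    linear_combination u 0 * z ^ k * hz

end ThreeTermRecurrence

lemma apply_one_eq_mul_of_tendsto_zero {K : Type*} [NormedCommRing K] {c z : K}
    (hz : c * z = z ^ 2 + 1) (hz1 : ‖z‖ < 1) {u : ℕ → K}
    (hrec : ∀ j, u (j + 2) = c * u (j + 1) - u j) (hu : Tendsto u atTop (𝓝 0)) :
    u 1 = z * u 0 := by
  -- `w` kills the `z ^ k` mode and is multiplied by `z⁻¹` at each step
  set w : ℕ → K := fun k => u (k + 1) - z * u k
  have hw : ∀ k, z ^ k * w k = w 0 := by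
    intro k
    induction k with
    | zero => simp
    | succ k ih =>
      rw [← ih]
      simp only [w, hrec]
      linear_combination (z ^ k * u (k + 1)) * hz
  have hlim : Tendsto (fun k => z ^ k * w k) atTop (𝓝 0) := by
    simpa using (tendsto_pow_atTop_nhds_zero_of_norm_lt_one hz1).mul
      (((tendsto_add_atTop_iff_nat 1).2 hu).sub (hu.const_mul z))
  simp only [hw] at hlim
  exact sub_eq_zero.1 (tendsto_nhds_unique tendsto_const_nhds hlim)

lemma im_eq_zero_of_chebSeq_succ_eq_mul {n : ℕ} {μ z : ℂ} (hμ : μ.im = 0)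
    (hz : chebSeq μ (n + 1) = z * chebSeq μ n) : z.im = 0 := by
  have hμ' : (μ.re : ℂ) = μ := Complex.ext rfl (by simp [hμ])
  have hreal : ∀ k, chebSeq μ k = ((chebSeq μ.re k : ℝ) : ℂ) := fun k => by
    conv_lhs => rw [← hμ']
    exact (map_chebSeq Complex.ofRealHom μ.re k).symm
  rw [hreal, hreal] at hz
  have ha : chebSeq μ.re n ≠ 0 := fun ha =>
    chebSeq_succ_ne_zero_of_eq_zero ha (by simpa [ha] using hz)
  have him := congrArg Complex.im hz
  simp only [Complex.ofReal_im, Complex.mul_im, mul_zero, zero_add] at him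
  exact (mul_eq_zero.1 him.symm).resolve_right ha

lemma summable_norm_sq_of_add_eq_mul_pow {g : ℕ → ℂ} {z : ℂ} (hz : ‖z‖ < 1) (n : ℕ)
    (hg : ∀ k, g (n + k) = g n * z ^ k) : Summable fun k => ‖g k‖ ^ 2 := by
  refine (summable_nat_add_iff n).1 ?_
  have hterm : ∀ k, ‖g (k + n)‖ ^ 2 = ‖g n‖ ^ 2 * (‖z‖ ^ 2) ^ k := fun k => by
    rw [add_comm, hg, norm_mul, norm_pow, mul_pow, ← pow_mul, ← pow_mul, mul_comm k]
  simp only [hterm]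
  exact (summable_geometric_of_lt_one (by positivity) (by nlinarith [norm_nonneg z])).mul_left _

lemma tendsto_zero_of_summable_norm_sq {g : ℕ → ℂ} (hg : Summable fun k => ‖g k‖ ^ 2) :
    Tendsto g atTop (𝓝 0) := by
  rw [tendsto_zero_iff_norm_tendsto_zero]
  simpa using hg.tendsto_atTop_zero.sqrt

def SolvesSchrodinger (n : ℕ) (h : ℝ) (l : ℂ) (g : ℕ → ℂ) : Prop :=
  ∀ k : ℕ, 1 ≤ k →
    g (k - 1) + (if k ≤ n then (h : ℂ) * Complex.I else 0) * g k + g (k + 1) = l * g k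

def schrodingerSol (n : ℕ) (h : ℝ) (l : ℂ) : ℕ → ℂ
  | 0 => 0
  | 1 => 1
  | k + 2 => (l - if k + 1 ≤ n then (h : ℂ) * Complex.I else 0) * schrodingerSol n h l (k + 1) -
      schrodingerSol n h l k

section Schrodinger

variable {n : ℕ} {h : ℝ} {l : ℂ} {g : ℕ → ℂ}

lemma SolvesSchrodinger.apply_add_two_of_le (hg : SolvesSchrodinger n h l g) {j : ℕ}
    (hj : j + 1 ≤ n) : g (j + 2) = (l - h * Complex.I) * g (j + 1) - g j := by
  have := hg (j + 1) (by omega)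
  rw [if_pos hj, Nat.add_sub_cancel] at this
  linear_combination this

lemma SolvesSchrodinger.apply_add_add_two (hg : SolvesSchrodinger n h l g) (j : ℕ) :
    g (n + (j + 2)) = l * g (n + (j + 1)) - g (n + j) := by
  have := hg (n + j + 1) (by omega)
  rw [if_neg (by omega), Nat.add_sub_cancel] at this
  linear_combination this

lemma solvesSchrodinger_schrodingerSol : SolvesSchrodinger n h l (schrodingerSol n h l) := by
  intro k hk
  obtain ⟨j, rfl⟩ := Nat.exists_eq_add_of_le' hk
  simp only [Nat.add_sub_cancel, schrodingerSol]
  ring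

variable {z : ℂ}

lemma chebSeq_succ_eq_mul_of_isSchrodingerEigenvalue (hl : l * z = z ^ 2 + 1) (hz1 : ‖z‖ < 1)
    (he : IsSchrodingerEigenvalue n h l) :
    chebSeq (l - h * Complex.I) (n + 1) = z * chebSeq (l - h * Complex.I) n := by
  obtain ⟨g, hg0, hgne, hgsum, hg⟩ := he
  have hg : SolvesSchrodinger n h l g := hg
  have htail : Tendsto (fun j => g (n + j)) atTop (𝓝 0) := by
    simpa [add_comm] using
      (tendsto_add_atTop_iff_nat n).2 (tendsto_zero_of_summable_norm_sq hgsum)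
  have hdecay : g (n + 1) = z * g n :=
    apply_one_eq_mul_of_tendsto_zero hl hz1 hg.apply_add_add_two htail
  have hgeom : ∀ k, g (n + k) = g n * z ^ k :=
    eq_mul_pow_of_recurrence hl hg.apply_add_add_two hdecay
  have hfin := eq_mul_chebSeq hg0 fun j hj => hg.apply_add_two_of_le hj
  have hg1 : g 1 ≠ 0 := by
    intro h1
    apply hgne
    funext k
    rcases le_or_gt k n with hk | hk
    · rw [hfin k (by omega), h1, zero_mul, Pi.zero_apply]
    · obtain ⟨j, rfl⟩ := Nat.exists_eq_add_of_le hk.le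
      rw [hgeom, hfin n (by omega), h1, zero_mul, zero_mul, Pi.zero_apply]
  apply mul_left_cancel₀ hg1
  rw [← hfin _ le_rfl, mul_left_comm, ← hfin n (by omega), hdecay]

lemma isSchrodingerEigenvalue_of_chebSeq_succ_eq_mul (hl : l * z = z ^ 2 + 1) (hz1 : ‖z‖ < 1)
    (hp : chebSeq (l - h * Complex.I) (n + 1) = z * chebSeq (l - h * Complex.I) n) :
    IsSchrodingerEigenvalue n h l := by
  set g := schrodingerSol n h l
  have hg : SolvesSchrodinger n h l g := solvesSchrodinger_schrodingerSol
  have hfin := eq_mul_chebSeq (u := g) rfl fun j hj => hg.apply_add_two_of_le hj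
  have hgeom : ∀ k, g (n + k) = g n * z ^ k := by
    refine eq_mul_pow_of_recurrence hl hg.apply_add_add_two ?_
    show g (n + 1) = z * g n
    rw [hfin _ le_rfl, hfin n (by omega), hp, mul_left_comm]
  exact ⟨g, rfl, fun h0 => one_ne_zero (congrFun h0 1),
    summable_norm_sq_of_add_eq_mul_pow hz1 n hgeom, hg⟩

lemma isSchrodingerEigenvalue_iff_chebSeq (hl : l * z = z ^ 2 + 1) (hz1 : ‖z‖ < 1) :
    IsSchrodingerEigenvalue n h l ↔
      chebSeq (l - h * Complex.I) (n + 1) = z * chebSeq (l - h * Complex.I) n :=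
  ⟨chebSeq_succ_eq_mul_of_isSchrodingerEigenvalue hl hz1,
    isSchrodingerEigenvalue_of_chebSeq_succ_eq_mul hl hz1⟩

end Schrodinger

lemma im_add_inv_eq_zero_of_norm_eq_one {ζ : ℂ} (hζ : ‖ζ‖ = 1) : (ζ + ζ⁻¹).im = 0 := by
  rw [Complex.inv_def, Complex.normSq_eq_norm_sq, hζ]
  simp

lemma exists_norm_lt_one_add_inv_eq {μ : ℂ} (hμ : μ.im ≠ 0) :
    ∃ ζ : ℂ, ζ ≠ 0 ∧ ‖ζ‖ < 1 ∧ ζ + ζ⁻¹ = μ := by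
  obtain ⟨s, hs⟩ := IsAlgClosed.exists_eq_mul_self (μ ^ 2 - 4)
  set ζ := (μ + s) / 2
  have hquad : ζ ^ 2 + 1 = μ * ζ := by
    simp only [ζ]
    linear_combination (-1 / 4 : ℂ) * hs
  have hζ0 : ζ ≠ 0 := by
    intro h
    simp [h] at hquad
  have hζμ : ζ + ζ⁻¹ = μ := by
    field_simp
    linear_combination hquad
  rcases lt_trichotomy ‖ζ‖ 1 with hlt | heq | hgt
  · exact ⟨ζ, hζ0, hlt, hζμ⟩
  · exact absurd (hζμ ▸ im_add_inv_eq_zero_of_norm_eq_one heq) hμ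
  · refine ⟨ζ⁻¹, inv_ne_zero hζ0, ?_, by rw [inv_inv, add_comm, hζμ]⟩
    rw [norm_inv]
    exact inv_lt_one_of_one_lt₀ hgt

section FieldAlgebra

variable {K : Type*} [Field K] {n : ℕ} {μ ζ z w : K}

lemma chebSeq_succ_eq_mul_iff (hμ : ζ + ζ⁻¹ = μ) (hζ0 : ζ ≠ 0) (hζ2 : ζ ^ 2 ≠ 1)
    (hζn : ζ ^ (2 * n) ≠ 1) :
    chebSeq μ (n + 1) = z * chebSeq μ n ↔ z = (ζ ^ (2 * n + 2) - 1) / (ζ ^ (2 * n + 1) - ζ) := by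
  have hμζ : μ * ζ = ζ ^ 2 + 1 := by rw [← hμ]; field_simp
  have hc : ζ ^ (n + 1) * (ζ ^ 2 - 1) ≠ 0 :=
    mul_ne_zero (pow_ne_zero _ hζ0) (sub_ne_zero.2 hζ2)
  have hden : ζ ^ (2 * n + 1) - ζ ≠ 0 := by
    rw [show ζ ^ (2 * n + 1) - ζ = ζ * (ζ ^ (2 * n) - 1) by ring]
    exact mul_ne_zero hζ0 (sub_ne_zero.2 hζn)
  have e1 : ζ ^ (n + 1) * (ζ ^ 2 - 1) * chebSeq μ (n + 1) = ζ * (ζ ^ (2 * n + 2) - 1) := by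
    linear_combination pow_mul_chebSeq hμζ (n + 1)
  have e0 : ζ ^ (n + 1) * (ζ ^ 2 - 1) * (z * chebSeq μ n) =
      ζ * (z * (ζ ^ (2 * n + 1) - ζ)) := by
    linear_combination ζ * z * pow_mul_chebSeq hμζ n
  rw [eq_div_iff hden, ← mul_right_inj' hc, e1, e0, mul_right_inj' hζ0, eq_comm]

lemma add_inv_eq_add_iff (hn : 1 ≤ n) (hζ0 : ζ ≠ 0) (h2n : ζ ^ (2 * n) ≠ 1)
    (h2n2 : ζ ^ (2 * n + 2) ≠ 1) (hz : z = (ζ ^ (2 * n + 2) - 1) / (ζ ^ (2 * n + 1) - ζ)) :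
    z + z⁻¹ = ζ + ζ⁻¹ + w ↔
      ζ ^ (2 * n - 1) * (ζ ^ 2 - 1) ^ 2 - w * (1 - ζ ^ (2 * n)) * (1 - ζ ^ (2 * n + 2)) = 0 := by
  obtain ⟨m, rfl⟩ := Nat.exists_eq_add_of_le' hn
  rw [show 2 * (m + 1) - 1 = 2 * m + 1 by omega]
  set A := ζ ^ (2 * (m + 1) + 2) - 1
  set B := ζ ^ (2 * (m + 1) + 1) - ζ
  have hA : A ≠ 0 := sub_ne_zero.2 h2n2
  have hB : B ≠ 0 := by
    rw [show B = ζ * (ζ ^ (2 * (m + 1)) - 1) by ring]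
    exact mul_ne_zero hζ0 (sub_ne_zero.2 h2n)
  -- `A ^ 2 + B ^ 2 - (ζ + ζ⁻¹) * A * B = (A - ζ * B) * (A - ζ⁻¹ * B) = ζ ^ (2 * m + 2) * (ζ ^ 2 - 1) ^ 2`
  have key : (z + z⁻¹ - (ζ + ζ⁻¹ + w)) * (A * B) = ζ * (ζ ^ (2 * m + 1) * (ζ ^ 2 - 1) ^ 2 -
      w * (1 - ζ ^ (2 * (m + 1))) * (1 - ζ ^ (2 * (m + 1) + 2))) := by
    subst hz
    field_simp
    ring
  rw [← sub_eq_zero, ← mul_left_inj' (mul_ne_zero hA hB), key, zero_mul, mul_eq_zero,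
    or_iff_right hζ0]

end FieldAlgebra

/-- Characterization of the eigenvalues of `J_{n,h}` via the algebraic equation
`P_n(ζ) = ζ^{2n-1}(ζ²-1)² - ih(1-ζ^{2n})(1-ζ^{2n+2}) = 0` together with
`z = (ζ^{2n+2}-1)/(ζ^{2n+1}-ζ)` (Proposition 3.2). -/
theorem stmt16 (n : ℕ) (hn : 1 ≤ n) (h : ℝ) (hh : 0 < h) (z : ℂ)
    (hz0 : z ≠ 0) (hz1 : ‖z‖ < 1) :
    IsSchrodingerEigenvalue n h (z + 1 / z) ↔
      ∃ ζ : ℂ, ζ ≠ 0 ∧ ‖ζ‖ < 1 ∧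
        ζ ^ (2 * n - 1) * (ζ ^ 2 - 1) ^ 2 -
          Complex.I * (h : ℂ) * (1 - ζ ^ (2 * n)) * (1 - ζ ^ (2 * n + 2)) = 0 ∧
        z = (ζ ^ (2 * n + 2) - 1) / (ζ ^ (2 * n + 1) - ζ) := by
  have hl : (z + z⁻¹) * z = z ^ 2 + 1 := by field_simp
  have hpow : ∀ ζ : ℂ, ‖ζ‖ < 1 → ζ ^ 2 ≠ 1 ∧ ζ ^ (2 * n) ≠ 1 ∧ ζ ^ (2 * n + 2) ≠ 1 :=
    fun ζ hζ1 => ⟨fun h1 => hζ1.ne (Complex.norm_eq_one_of_pow_eq_one h1 (by omega)),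
      fun h1 => hζ1.ne (Complex.norm_eq_one_of_pow_eq_one h1 (by omega)),
      fun h1 => hζ1.ne (Complex.norm_eq_one_of_pow_eq_one h1 (by omega))⟩
  rw [one_div, isSchrodingerEigenvalue_iff_chebSeq hl hz1]
  constructor
  · intro hp
    have hμ : (z + z⁻¹ - h * Complex.I).im ≠ 0 := fun hμ => by
      simp [im_eq_zero_of_chebSeq_succ_eq_mul hμ hp] at hμ
      exact hh.ne' hμ
    obtain ⟨ζ, hζ0, hζ1, hζμ⟩ := exists_norm_lt_one_add_inv_eq hμ
    obtain ⟨h2, h2n, h2n2⟩ := hpow ζ hζ1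
    have hzf := (chebSeq_succ_eq_mul_iff hζμ hζ0 h2 h2n).1 hp
    refine ⟨ζ, hζ0, hζ1, (add_inv_eq_add_iff hn hζ0 h2n h2n2 hzf).1 ?_, hzf⟩
    linear_combination -hζμ
  · rintro ⟨ζ, hζ0, hζ1, hP, hzf⟩
    obtain ⟨h2, h2n, h2n2⟩ := hpow ζ hζ1
    have hζμ := (add_inv_eq_add_iff hn hζ0 h2n h2n2 hzf).2 hP
    exact (chebSeq_succ_eq_mul_iff (by linear_combination -hζμ) hζ0 h2 h2n).2 hzf
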